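/- Let θ be parameters of NN({m_l}_{l=0}^L), fix 1 ≤ l ≤ L-1, s ∈ [m_l], α ∈ ℝ, and let θ' = T^α_{l,s}(θ) be the one-step splitting embedding of θ. Then for every input x ∈ ℝ^d: (i) f^[l']_{θ'}(x) = f^[l']_θ(x) for every layer l' ∈ [L] with l' ≠ l, and f^[l]_{θ'}(x) = [f^[l]_θ(x); (f^[l]_θ(x))_s] (the old feature vector with its s-th entry duplicated as a new last entry); in particular the output functions coincide, f_{θ'}(x) = f_θ(x); (ii) the feature gradients satisfy g^[l']_{θ'}(x) = g^[l']_θ(x) for l' ≠ l, l' ∈ [L-1], and g^[l]_{θ'}(x) = [g^[l]_θ(x); (g^[l]_θ(x))_s]. -/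

import Mathlib

namespace EmbeddingPrinciple

/-- Parameters of a fully-connected NN: `(θ l).1 i j` is the weight `W^{[l+1]}_{ij}`
and `(θ l).2 i` is the bias `b^{[l+1]}_i` (the paper's layer `l` corresponds to index `l-1`).
Only the coordinates below the widths are meaningful for a concrete architecture. -/
abbrev NNParams : Type := ℕ → (ℕ → ℕ → ℝ) × (ℕ → ℝ)

/-- Feature vectors `f^{[l]}` (entrywise activation `σ`); `m` is the width function. -/
noncomputable def feat (σ : ℝ → ℝ) (m : ℕ → ℕ) (θ : NNParams) (x : ℕ → ℝ) : ℕ → ℕ → ℝ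
  | 0 => x
  | l + 1 => fun i =>
      σ ((∑ j ∈ Finset.range (m l), (θ l).1 i j * feat σ m θ x l j) + (θ l).2 i)

/-- Pre-activation of layer `l+1`: `W^{[l+1]} f^{[l]} + b^{[l+1]}`. -/
noncomputable def preact (σ : ℝ → ℝ) (m : ℕ → ℕ) (θ : NNParams) (x : ℕ → ℝ) (l i : ℕ) : ℝ :=
  (∑ j ∈ Finset.range (m l), (θ l).1 i j * feat σ m θ x l j) + (θ l).2 i

/-- Output `f_θ` of the `(K+1)`-layer network (the paper's `L` is `K+1`). -/
noncomputable def nnOut (σ : ℝ → ℝ) (m : ℕ → ℕ) (K : ℕ) (θ : NNParams) (x : ℕ → ℝ) :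
    ℕ → ℝ := fun i => preact σ m θ x K i

/-- Feature gradient `g^{[l+1]} = σ'(W^{[l+1]} f^{[l]} + b^{[l+1]})`. -/
noncomputable def gFeat (σ : ℝ → ℝ) (m : ℕ → ℕ) (θ : NNParams) (x : ℕ → ℝ) (l i : ℕ) : ℝ :=
  deriv σ (preact σ m θ x l i)

/-- Output truncated to the valid output coordinates. -/
noncomputable def truncOut (σ : ℝ → ℝ) (m : ℕ → ℕ) (K : ℕ) (θ : NNParams) (x : ℕ → ℝ) :
    ℕ → ℝ := fun i => if i < m (K + 1) then nnOut σ m K θ x i else 0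

/-- Empirical risk `R_S(θ) = (1/n) ∑ᵢ ℓ(f_θ(xᵢ), yᵢ)`. -/
noncomputable def risk (σ : ℝ → ℝ) (m : ℕ → ℕ) (K : ℕ)
    (loss : (ℕ → ℝ) → (ℕ → ℝ) → ℝ) {n : ℕ} (X Y : Fin n → ℕ → ℝ) (θ : NNParams) : ℝ :=
  (n : ℝ)⁻¹ * ∑ a : Fin n, loss (truncOut σ m K θ (X a)) (Y a)

/-- Update a single weight coordinate. -/
def updW (θ : NNParams) (l i j : ℕ) (t : ℝ) : NNParams := fun l' =>
  if l' = l then ((fun i' j' => if i' = i ∧ j' = j then t else (θ l).1 i' j'), (θ l).2)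
  else θ l'

/-- Update a single bias coordinate. -/
def updB (θ : NNParams) (l i : ℕ) (t : ℝ) : NNParams := fun l' =>
  if l' = l then ((θ l).1, fun i' => if i' = i then t else (θ l).2 i') else θ l'

/-- `θ` is a critical point of `R` : all partial derivatives with respect to the valid
coordinates of the `(K+1)`-layer architecture with width function `m` vanish. -/
def IsCritical (R : NNParams → ℝ) (m : ℕ → ℕ) (K : ℕ) (θ : NNParams) : Prop :=
  (∀ l, l ≤ K → ∀ i, i < m (l + 1) → ∀ j, j < m l →
      deriv (fun t => R (updW θ l i j t)) ((θ l).1 i j) = 0) ∧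
  (∀ l, l ≤ K → ∀ i, i < m (l + 1) →
      deriv (fun t => R (updB θ l i t)) ((θ l).2 i) = 0)

/-- Equality of two parameter tuples on all valid coordinates of the architecture. -/
def ParamEqOn (m : ℕ → ℕ) (K : ℕ) (θ₁ θ₂ : NNParams) : Prop :=
  ∀ l, l ≤ K → ∀ i, i < m (l + 1) →
    (∀ j, j < m l → (θ₁ l).1 i j = (θ₂ l).1 i j) ∧ (θ₁ l).2 i = (θ₂ l).2 i

/-- Error vectors by reversed index: `errRev … t = z^{[K+1-t]}`, where `z^{[K+1]} = ∇ℓ`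
(represented by the function `dloss`) and `z^{[l]} = (W^{[l+1]})ᵀ (z^{[l+1]} ∘ g^{[l+1]})`. -/
noncomputable def errRev (σ : ℝ → ℝ) (m : ℕ → ℕ) (K : ℕ) (θ : NNParams)
    (dloss : (ℕ → ℝ) → (ℕ → ℝ) → ℕ → ℝ) (x y : ℕ → ℝ) : ℕ → ℕ → ℝ
  | 0 => dloss (truncOut σ m K θ x) y
  | t + 1 => fun j =>
      ∑ i ∈ Finset.range (m (K + 1 - t)),
        (θ (K - t)).1 i j *
          (errRev σ m K θ dloss x y t i * (if t = 0 then 1 else gFeat σ m θ x (K - t) i))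

/-- `e^{[l]} = z^{[l]} ∘ g^{[l]}` (with `g^{[K+1]} = 1`). -/
noncomputable def errE (σ : ℝ → ℝ) (m : ℕ → ℕ) (K : ℕ) (θ : NNParams)
    (dloss : (ℕ → ℝ) → (ℕ → ℝ) → ℕ → ℝ) (x y : ℕ → ℝ) (l i : ℕ) : ℝ :=
  errRev σ m K θ dloss x y (K + 1 - l) i *
    (if l = K + 1 then 1 else gFeat σ m θ x (l - 1) i)

/-- Differentiability of the loss in its first argument (on each finite-dimensional
coordinate block). -/
def LossDiff (loss : (ℕ → ℝ) → (ℕ → ℝ) → ℝ) : Prop :=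
  ∀ (y : ℕ → ℝ) (d : ℕ),
    Differentiable ℝ (fun u : Fin d → ℝ => loss (fun i => if h : i < d then u ⟨i, h⟩ else 0) y)

/-- Widths after adding one neuron in the paper's layer `p+1`. -/
def widen (m : ℕ → ℕ) (p : ℕ) : ℕ → ℕ := fun l => if l = p + 1 then m (p + 1) + 1 else m l

/-- One-step null embedding `T^α_{l,0}` at the paper's layer `l = p+1`. -/
def nullEmb (m : ℕ → ℕ) (p : ℕ) (α : ℝ) (θ : NNParams) : NNParams := fun l =>
  if l = p then
    ((fun i j => if i = m (p + 1) then 0 else (θ p).1 i j),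
     (fun i => if i = m (p + 1) then α else (θ p).2 i))
  else if l = p + 1 then
    ((fun i j => if j = m (p + 1) then 0 else (θ (p + 1)).1 i j), (θ (p + 1)).2)
  else θ l

/-- One-step splitting embedding `T^α_{l,s}` at the paper's layer `l = p+1`,
splitting neuron `s`. -/
def splitEmb (m : ℕ → ℕ) (p s : ℕ) (α : ℝ) (θ : NNParams) : NNParams := fun l =>
  if l = p then
    ((fun i j => if i = m (p + 1) then (θ p).1 s j else (θ p).1 i j),
     (fun i => if i = m (p + 1) then (θ p).2 s else (θ p).2 i))
  else if l = p + 1 then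
    ((fun i j =>
        if j = s then (1 - α) * (θ (p + 1)).1 i s
        else if j = m (p + 1) then α * (θ (p + 1)).1 i s
        else (θ (p + 1)).1 i j),
     (θ (p + 1)).2)
  else θ l

/-!
The new neuron `m (p + 1)` of layer `p + 1` has the same incoming weights and bias as neuron `s`,
so it computes the same pre-activation, feature and feature gradient. In layer `p + 2` the
outgoing weights `(1 - α) w` of `s` and `α w` of the copy add up to the old weight `w`, so the
pre-activations of layer `p + 2`, and hence all later features and the output, are unchanged.
-/

theorem feat_succ (σ : ℝ → ℝ) (m : ℕ → ℕ) (θ : NNParams) (x : ℕ → ℝ) (l i : ℕ) :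
    feat σ m θ x (l + 1) i = σ (preact σ m θ x l i) :=
  rfl

theorem preact_congr {σ : ℝ → ℝ} {m m' : ℕ → ℕ} {θ θ' : NNParams} {x : ℕ → ℝ} {l : ℕ}
    (hm : m' l = m l) (hθ : θ' l = θ l) (hf : feat σ m' θ' x l = feat σ m θ x l) (i : ℕ) :
    preact σ m' θ' x l i = preact σ m θ x l i := by
  simp only [preact, hm, hθ, hf]

theorem widen_of_ne {m : ℕ → ℕ} {p l : ℕ} (h : l ≠ p + 1) : widen m p l = m l :=
  if_neg h

theorem widen_self (m : ℕ → ℕ) (p : ℕ) : widen m p (p + 1) = m (p + 1) + 1 :=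
  if_pos rfl

section splitEmb

variable {σ : ℝ → ℝ} {m : ℕ → ℕ} {p s : ℕ} {α : ℝ} {θ : NNParams} {x : ℕ → ℝ}

theorem splitEmb_of_ne {l : ℕ} (h₁ : l ≠ p) (h₂ : l ≠ p + 1) : splitEmb m p s α θ l = θ l := by
  simp only [splitEmb, if_neg h₁, if_neg h₂]

theorem splitEmb_succ_snd : (splitEmb m p s α θ (p + 1)).2 = (θ (p + 1)).2 := by
  simp [splitEmb]

theorem feat_splitEmb_of_le {l : ℕ} (hl : l ≤ p) :
    feat σ (widen m p) (splitEmb m p s α θ) x l = feat σ m θ x l := by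
  induction l with
  | zero => rfl
  | succ l ih =>
    funext i
    rw [feat_succ, feat_succ, preact_congr (widen_of_ne (by omega))
      (splitEmb_of_ne (by omega) (by omega)) (ih (by omega))]

theorem preact_splitEmb_self (i : ℕ) :
    preact σ (widen m p) (splitEmb m p s α θ) x p i
      = preact σ m θ x p (if i = m (p + 1) then s else i) := by
  simp only [preact, widen_of_ne (Nat.succ_ne_self p).symm, feat_splitEmb_of_le le_rfl]
  split_ifs with h <;> simp [splitEmb, h]

theorem feat_splitEmb_succ (i : ℕ) :
    feat σ (widen m p) (splitEmb m p s α θ) x (p + 1) i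
      = feat σ m θ x (p + 1) (if i = m (p + 1) then s else i) := by
  rw [feat_succ, feat_succ, preact_splitEmb_self]

theorem preact_splitEmb_succ (hs : s < m (p + 1)) (i : ℕ) :
    preact σ (widen m p) (splitEmb m p s α θ) x (p + 1) i = preact σ m θ x (p + 1) i := by
  set w := (θ (p + 1)).1 i
  set f := feat σ m θ x (p + 1)
  have hsn : s ≠ m (p + 1) := hs.ne
  have hs' : s ∈ Finset.range (m (p + 1)) := Finset.mem_range.2 hs
  have hw' : ∀ j, (splitEmb m p s α θ (p + 1)).1 i j
      = if j = s then (1 - α) * w s else if j = m (p + 1) then α * w s else w j := by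
    intro j
    simp [splitEmb, w]
  have hrest : ∀ j ∈ (Finset.range (m (p + 1))).erase s,
      (splitEmb m p s α θ (p + 1)).1 i j * feat σ (widen m p) (splitEmb m p s α θ) x (p + 1) j
        = w j * f j := by
    intro j hj
    obtain ⟨hjs, hj⟩ := Finset.mem_erase.1 hj
    have hjn : j ≠ m (p + 1) := (Finset.mem_range.1 hj).ne
    rw [hw', feat_splitEmb_succ, if_neg hjs, if_neg hjn, if_neg hjn]
  rw [preact, preact, widen_self, Finset.sum_range_succ, ← Finset.add_sum_erase _ _ hs',
    ← Finset.add_sum_erase _ _ hs', Finset.sum_congr rfl hrest, hw', hw', feat_splitEmb_succ,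
    feat_splitEmb_succ, if_pos rfl, if_neg hsn, if_pos rfl, if_neg hsn.symm, if_pos rfl,
    splitEmb_succ_snd]
  ring

theorem feat_splitEmb_of_gt (hs : s < m (p + 1)) {l : ℕ} (hl : p + 1 < l) :
    feat σ (widen m p) (splitEmb m p s α θ) x l = feat σ m θ x l := by
  induction l, hl using Nat.le_induction with
  | base => funext i; rw [feat_succ, feat_succ, preact_splitEmb_succ hs]
  | succ l hl ih =>
    funext i
    rw [feat_succ, feat_succ, preact_congr (widen_of_ne (by omega))
      (splitEmb_of_ne (by omega) (by omega)) ih]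

theorem feat_splitEmb_of_ne (hs : s < m (p + 1)) {l : ℕ} (hl : l ≠ p + 1) :
    feat σ (widen m p) (splitEmb m p s α θ) x l = feat σ m θ x l := by
  rcases Nat.lt_or_gt_of_ne hl with hl | hl
  · exact feat_splitEmb_of_le (by omega)
  · exact feat_splitEmb_of_gt hs hl

theorem preact_splitEmb_of_ne (hs : s < m (p + 1)) {q : ℕ} (hq : q ≠ p) (i : ℕ) :
    preact σ (widen m p) (splitEmb m p s α θ) x q i = preact σ m θ x q i := by
  by_cases hq₁ : q = p + 1
  · subst hq₁
    exact preact_splitEmb_succ hs i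
  · exact preact_congr (widen_of_ne hq₁) (splitEmb_of_ne hq hq₁) (feat_splitEmb_of_ne hs hq₁) i

end splitEmb

theorem one_step_splitting_embedding_features_general
    (K : ℕ) (m : ℕ → ℕ) (σ : ℝ → ℝ)
    (p : ℕ) (hp : p < K) (s : ℕ) (hs : s < m (p + 1)) (α : ℝ)
    (θ : NNParams) (x : ℕ → ℝ) :
    -- (i) feature vectors of every layer `l' ∈ [L-1]` other than `p+1` agree
    (∀ l', 1 ≤ l' → l' ≤ K → l' ≠ p + 1 →
        ∀ i, feat σ (widen m p) (splitEmb m p s α θ) x l' i = feat σ m θ x l' i) ∧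
    -- at layer `p+1` the old feature vector is kept and its `s`-th entry is duplicated
    (∀ i, i < m (p + 1) →
        feat σ (widen m p) (splitEmb m p s α θ) x (p + 1) i = feat σ m θ x (p + 1) i) ∧
    feat σ (widen m p) (splitEmb m p s α θ) x (p + 1) (m (p + 1)) = feat σ m θ x (p + 1) s ∧
    -- in particular the output functions coincide
    (∀ i, nnOut σ (widen m p) K (splitEmb m p s α θ) x i = nnOut σ m K θ x i) ∧
    -- (ii) feature gradients: `gFeat … q` is the paper's `g^{[q+1]}`, `q+1 ∈ [L-1]`
    (∀ q, q < K → q ≠ p →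
        ∀ i, gFeat σ (widen m p) (splitEmb m p s α θ) x q i = gFeat σ m θ x q i) ∧
    (∀ i, i < m (p + 1) →
        gFeat σ (widen m p) (splitEmb m p s α θ) x p i = gFeat σ m θ x p i) ∧
    gFeat σ (widen m p) (splitEmb m p s α θ) x p (m (p + 1)) = gFeat σ m θ x p s := by
  refine ⟨fun l _ _ hl i => congrFun (feat_splitEmb_of_ne hs hl) i,
    fun i hi => ?_, ?_, fun i => preact_splitEmb_of_ne hs hp.ne' i,
    fun q _ hq i => congrArg (deriv σ) (preact_splitEmb_of_ne hs hq i),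
    fun i hi => ?_, ?_⟩
  · rw [feat_splitEmb_succ, if_neg hi.ne]
  · rw [feat_splitEmb_succ, if_pos rfl]
  · rw [gFeat, gFeat, preact_splitEmb_self, if_neg hi.ne]
  · rw [gFeat, gFeat, preact_splitEmb_self, if_pos rfl]

/-- feature vectors and feature gradients under the one-step splitting
embedding. -/
theorem one_step_splitting_embedding_features
    (K : ℕ) (hK : 1 ≤ K) (m : ℕ → ℕ) (σ : ℝ → ℝ) (hσ : Differentiable ℝ σ)
    (p : ℕ) (hp : p < K) (s : ℕ) (hs : s < m (p + 1)) (α : ℝ)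
    (θ : NNParams) (x : ℕ → ℝ) :
    -- (i) feature vectors of every layer `l' ∈ [L-1]` other than `p+1` agree
    (∀ l', 1 ≤ l' → l' ≤ K → l' ≠ p + 1 →
        ∀ i, feat σ (widen m p) (splitEmb m p s α θ) x l' i = feat σ m θ x l' i) ∧
    -- at layer `p+1` the old feature vector is kept and its `s`-th entry is duplicated
    (∀ i, i < m (p + 1) →
        feat σ (widen m p) (splitEmb m p s α θ) x (p + 1) i = feat σ m θ x (p + 1) i) ∧
    feat σ (widen m p) (splitEmb m p s α θ) x (p + 1) (m (p + 1)) = feat σ m θ x (p + 1) s ∧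
    -- in particular the output functions coincide
    (∀ i, nnOut σ (widen m p) K (splitEmb m p s α θ) x i = nnOut σ m K θ x i) ∧
    -- (ii) feature gradients: `gFeat … q` is the paper's `g^{[q+1]}`, `q+1 ∈ [L-1]`
    (∀ q, q < K → q ≠ p →
        ∀ i, gFeat σ (widen m p) (splitEmb m p s α θ) x q i = gFeat σ m θ x q i) ∧
    (∀ i, i < m (p + 1) →
        gFeat σ (widen m p) (splitEmb m p s α θ) x p i = gFeat σ m θ x p i) ∧
    gFeat σ (widen m p) (splitEmb m p s α θ) x p (m (p + 1)) = gFeat σ m θ x p s :=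
  one_step_splitting_embedding_features_general K m σ p hp s hs α θ x

end EmbeddingPrinciple
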